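/- arXiv:2302.06104 — 2 statements merged into one kernel-verified Lean document; each statement's English description precedes it below -/
import Mathlib

section
/- For every positive integer n and every m ≥ 1, the number of partitions of n into odd parts that use exactly m distinct part sizes equals the number of partitions of n into distinct parts that decompose into exactly m maximal runs of consecutive integers. -/
/-!
Sylvester's bijection, in recursive form. Let `x₁ ≥ ⋯ ≥ x_ℓ` be odd parts with
`x₁ = 2a + 1 ≥ 3`, let `ℓ'` be the number of `i ≥ 2` with `xᵢ ≥ 3`, and let `μ` be the image of
the odd partition `(xᵢ - 2)` (`i ≥ 2`, `xᵢ ≥ 3`), which has `ℓ'` parts. The image of `x` is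
`ℓ + a > a + ℓ' > μ`; a partition into `1`s goes to the single part `ℓ`. The first two parts
recover `a` and the number `ℓ - 1 - ℓ'` of parts equal to `1`, which gives the inverse.
In `ℓ + a > a + ℓ' > μ₁`, the first gap exceeds `1` iff some part equals `1`, the second iff
`x₁` is not repeated (as `μ₁ = ℓ' + (x₂ - 3) / 2`): these are exactly the part sizes of `x`
that the recursion does not see, so runs of the image and distinct part sizes of `x` are
equinumerous.
-/

/-- The parts of a partition, listed in weakly decreasing order. -/
def plist {n : ℕ} (p : n.Partition) : List ℕ := (p.parts.sort (· ≤ ·)).reverse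

/-- The distinct parts of a partition, listed in strictly decreasing order. -/
def dparts {n : ℕ} (p : n.Partition) : List ℕ := (p.parts.toFinset.sort (· ≤ ·)).reverse

/-- The number of maximal runs of consecutive integers in a (strictly decreasing) list. -/
def runs : List ℕ → ℕ
  | [] => 0
  | [_] => 1
  | a :: b :: t => (if b + 1 < a then 1 else 0) + runs (b :: t)

/-- Bessenrodt's multiplicity pattern `j, r-j, j, r-j, …` over strictly
decreasing distinct part sizes. -/
def RPpat {n : ℕ} (r j : ℕ) (p : n.Partition) : Prop :=
  ∀ i < (dparts p).length,
    Multiset.count ((dparts p).getD i 0) p.parts = if i % 2 = 0 then j else r - j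

/-- The repeating multiplicity pattern `s 1 - s 0, s 2 - s 1, …, s t - s (t-1), s 1 - s 0, …`
over strictly decreasing distinct part sizes. -/
def RPgen {n : ℕ} (t : ℕ) (s : ℕ → ℕ) (p : n.Partition) : Prop :=
  ∀ i < (dparts p).length,
    Multiset.count ((dparts p).getD i 0) p.parts = s (i % t + 1) - s (i % t)

/-- The class-regular side of the generalized Bessenrodt identity:
conditions (a), (b), (c) on quotients and residues of the parts mod `r`. -/
def CPgen {n : ℕ} (r t : ℕ) (s : ℕ → ℕ) (p : n.Partition) : Prop :=
  (∀ k ∈ p.parts, ∃ j, 0 < j ∧ j < t ∧ k % r = s j) ∧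
  (∀ i < (plist p).length, i + 1 ≤ (plist p).getD i 0 / r →
    (plist p).getD i 0 % r = s (t - 1) ∧
    ∀ a, 0 < a → a < t - 1 → ∃ k < (plist p).length,
      (plist p).getD k 0 / r = i ∧ (plist p).getD k 0 % r = s a) ∧
  (∀ i < (plist p).length, (plist p).getD i 0 / r = i →
    ∀ j < t, (plist p).getD i 0 % r = s j →
      ∀ a, 0 < a → a < j → ∃ k < (plist p).length,
        (plist p).getD k 0 / r = i ∧ (plist p).getD k 0 % r = s a)

open List

lemma runs_cons (a : ℕ) (l : List ℕ) :
    runs (a :: l) = runs l + if ∀ b ∈ l.head?, b + 1 < a then 1 else 0 := by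
  cases l with
  | nil => simp [runs]
  | cons b t => simp [runs, add_comm]

lemma card_toFinset_cons_of_pairwise {x : ℕ} {t : List ℕ} (h : (x :: t).Pairwise (· ≥ ·)) :
    (x :: t).toFinset.card = t.toFinset.card + if ∀ y ∈ t.head?, y < x then 1 else 0 := by
  rw [toFinset_cons]
  cases t with
  | nil => simp
  | cons y t =>
    obtain ⟨hx, ht⟩ := pairwise_cons.1 h
    by_cases hyx : y < x
    · have hxt : x ∉ y :: t := fun hmem => by
        rcases mem_cons.1 hmem with rfl | hmem
        · omega
        · exact absurd ((pairwise_cons.1 ht).1 x hmem) (by omega)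
      rw [Finset.card_insert_of_notMem (by simpa using hxt)]
      simp [hyx]
    · have : x = y := le_antisymm (not_lt.1 hyx) (hx y mem_cons_self)
      subst this
      simp

lemma card_toFinset_map_add_two_append (L : List ℕ) (c : ℕ) :
    (L.map (· + 2) ++ replicate c 1).toFinset.card =
      L.toFinset.card + if c = 0 then 0 else 1 := by
  have hdisj : Disjoint (L.map (· + 2)).toFinset (replicate c 1).toFinset := by
    simp only [Finset.disjoint_left, mem_toFinset, mem_map, mem_replicate]
    omega
  rw [toFinset_append, Finset.card_union_of_disjoint hdisj]
  have hmap : (L.map (· + 2)).toFinset.card = L.toFinset.card := by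
    simp only [card_toFinset, dedup_map_of_injective (add_left_injective 2), length_map]
  rw [hmap]
  rcases Nat.eq_zero_or_pos c with rfl | hc
  · simp
  · simp [toFinset_replicate_of_ne_zero hc.ne', hc.ne']

def OddParts (l : List ℕ) : Prop := l.Pairwise (· ≥ ·) ∧ ∀ x ∈ l, Odd x

-- `IsChain` rather than `Pairwise`: extending a strict list only needs a comparison with its head.
def DistinctParts (l : List ℕ) : Prop := l.IsChain (· > ·) ∧ ∀ x ∈ l, 0 < x

namespace OddParts

lemma nil : OddParts [] := ⟨Pairwise.nil, by simp⟩

lemma replicate_one (c : ℕ) : OddParts (replicate c 1) :=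
  ⟨pairwise_replicate.2 (Or.inr le_rfl), fun _ hy => (eq_of_mem_replicate hy) ▸ odd_one⟩

lemma pos {l : List ℕ} (h : OddParts l) : ∀ x ∈ l, 0 < x := fun x hx => (h.2 x hx).pos

lemma tail {x : ℕ} {t : List ℕ} (h : OddParts (x :: t)) : OddParts t :=
  ⟨(pairwise_cons.1 h.1).2, fun y hy => h.2 y (mem_cons_of_mem x hy)⟩

lemma cons_map_add_two_append {x c : ℕ} {L : List ℕ} (hx : Odd x) (hL : OddParts L)
    (hLx : ∀ y ∈ L, y + 2 ≤ x) : OddParts (x :: (L.map (· + 2) ++ replicate c 1)) := by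
  refine ⟨?_, ?_⟩
  · simp only [pairwise_cons, pairwise_append, pairwise_map, pairwise_replicate, mem_append,
      mem_map, mem_replicate]
    refine ⟨?_, ?_, ?_⟩
    · rintro y (⟨z, hz, rfl⟩ | ⟨-, rfl⟩)
      · exact hLx z hz
      · exact hx.pos
    · exact hL.1.imp (by omega)
    · refine ⟨Or.inr le_rfl, ?_⟩
      rintro _ ⟨z, -, rfl⟩ _ ⟨-, rfl⟩
      omega
  · simp only [mem_cons, mem_append, mem_map, mem_replicate]
    rintro y (rfl | ⟨z, hz, rfl⟩ | ⟨-, rfl⟩)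
    · exact hx
    · exact (hL.2 z hz).add_even even_two
    · exact odd_one

lemma exists_eq_map_add_two_append {t : List ℕ} (ht : OddParts t) :
    ∃ L c, OddParts L ∧ t = L.map (· + 2) ++ replicate c 1 := by
  induction t with
  | nil => exact ⟨[], 0, nil, rfl⟩
  | cons y t ih =>
    obtain ⟨L, c, hL, rfl⟩ := ih ht.tail
    have hyL : ∀ z ∈ L, z + 2 ≤ y := fun z hz =>
      (pairwise_cons.1 ht.1).1 _ (mem_append_left _ (mem_map_of_mem hz))
    obtain ⟨k, rfl⟩ := ht.2 y mem_cons_self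
    rcases Nat.eq_zero_or_pos k with rfl | hk
    · have hLnil : L = [] := eq_nil_iff_forall_not_mem.2 fun z hz => by
        have := hyL z hz; omega
      exact ⟨[], c + 1, nil, by simp [hLnil, replicate_succ]⟩
    · refine ⟨(2 * k - 1) :: L, c, ⟨pairwise_cons.2 ⟨fun z hz => ?_, hL.1⟩, ?_⟩, ?_⟩
      · have := hyL z hz; omega
      · rintro z (_ | ⟨_, hz⟩)
        · exact ⟨k - 1, by omega⟩
        · exact hL.2 z hz
      · simp only [map_cons, cons_append, cons.injEq, and_true]
        omega

@[elab_as_elim]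
theorem induction {motive : (l : List ℕ) → OddParts l → Prop}
    (nil : motive [] OddParts.nil) (ones : ∀ c, motive (replicate (c + 1) 1) (replicate_one _))
    (cons : ∀ x c L, 3 ≤ x →
      ∀ (hxo : Odd x) (hL : OddParts L) (hLx : ∀ y ∈ L, y + 2 ≤ x),
      motive L hL →
        motive (x :: (L.map (· + 2) ++ replicate c 1)) (hL.cons_map_add_two_append hxo hLx))
    {l : List ℕ} (h : OddParts l) : motive l h := by
  induction hn : l.length using Nat.strong_induction_on generalizing l with
  | _ n ih =>
  cases l with
  | nil => exact nil
  | cons x t =>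
    obtain ⟨L, c, hL, rfl⟩ := h.tail.exists_eq_map_add_two_append
    have hLx : ∀ y ∈ L, y + 2 ≤ x := fun y hy =>
      (pairwise_cons.1 h.1).1 _ (mem_append_left _ (mem_map_of_mem hy))
    obtain ⟨k, rfl⟩ := h.2 x mem_cons_self
    rcases Nat.eq_zero_or_pos k with rfl | hk
    · have hLnil : L = [] := eq_nil_iff_forall_not_mem.2 fun y hy => by
        have := hLx y hy; omega
      subst hLnil
      exact ones c
    · refine cons _ c L (by omega) ⟨k, rfl⟩ hL hLx (ih L.length ?_ hL rfl)
      subst hn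
      simp

end OddParts

-- On odd parts, `(t.map (· - 2)).filter (0 < ·)` lists the `y - 2` for the `y ∈ t`, `y ≥ 3`.
def sylvester : List ℕ → List ℕ
  | [] => []
  | x :: t =>
    if x = 1 then [t.length + 1]
    else
      (t.length + 1 + (x - 1) / 2) :: ((x - 1) / 2 + ((t.map (· - 2)).filter (0 < ·)).length) ::
        sylvester ((t.map (· - 2)).filter (0 < ·))
termination_by l => l.length
decreasing_by exact Nat.lt_succ_of_le ((length_filter_le _ _).trans (by simp))

def sylvesterInv : List ℕ → List ℕ
  | [] => []
  | [a] => replicate a 1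
  | a :: b :: rest =>
    (2 * (b - (sylvesterInv rest).length) + 1) ::
      ((sylvesterInv rest).map (· + 2) ++ replicate (a - b - 1) 1)

lemma sylvester_one_cons (t : List ℕ) : sylvester (1 :: t) = [t.length + 1] := by
  rw [sylvester.eq_2, if_pos rfl]

lemma sylvester_cons_map_add_two_append {x c : ℕ} {L : List ℕ} (hx : 3 ≤ x)
    (hL : ∀ y ∈ L, 0 < y) :
    sylvester (x :: (L.map (· + 2) ++ replicate c 1)) =
      (L.length + c + 1 + (x - 1) / 2) :: ((x - 1) / 2 + L.length) :: sylvester L := by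
  have hlow : ((L.map (· + 2) ++ replicate c 1).map (· - 2)).filter (0 < ·) = L := by
    simpa [map_map, Function.comp_def, filter_append] using hL
  rw [sylvester.eq_2, if_neg (by omega), hlow]
  simp

lemma head?_sylvester (l : List ℕ) :
    (sylvester l).head? = l.head?.map (fun x => l.length + (x - 1) / 2) := by
  cases l with
  | nil => simp [sylvester.eq_1]
  | cons x t =>
    rw [sylvester.eq_2]
    split_ifs with hx
    · simp [hx]
    · simp

lemma sylvester_replicate_one (c : ℕ) : sylvester (replicate (c + 1) 1) = [c + 1] := by
  rw [replicate_succ, sylvester_one_cons, length_replicate]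

lemma sum_sylvester {l : List ℕ} (hl : OddParts l) : (sylvester l).sum = l.sum := by
  induction hl using OddParts.induction with
  | nil => simp [sylvester.eq_1]
  | ones c => simp [sylvester_replicate_one]
  | cons x c L hx hxo hL _ ih =>
    obtain ⟨k, rfl⟩ := hxo
    rw [sylvester_cons_map_add_two_append hx hL.pos]
    simp only [sum_cons, ih, sum_append, sum_map_add, sum_replicate, map_const', map_id',
      smul_eq_mul]
    omega

lemma pos_of_mem_sylvester {l : List ℕ} (hl : OddParts l) : ∀ y ∈ sylvester l, 0 < y := by
  induction hl using OddParts.induction with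
  | nil => simp [sylvester.eq_1]
  | ones c => simp [sylvester_replicate_one]
  | cons x c L hx _ hL _ ih =>
    rw [sylvester_cons_map_add_two_append hx hL.pos]
    rintro y (_ | ⟨_, _ | ⟨_, hy⟩⟩)
    · omega
    · omega
    · exact ih y hy

lemma isChain_sylvester {l : List ℕ} (hl : OddParts l) : (sylvester l).IsChain (· > ·) := by
  induction hl using OddParts.induction with
  | nil => simp [sylvester.eq_1]
  | ones c => simp [sylvester_replicate_one]
  | cons x c L hx _ hL hLx ih =>
    rw [sylvester_cons_map_add_two_append hx hL.pos, isChain_cons_cons,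
      isChain_cons, head?_sylvester]
    refine ⟨by omega, ?_, ih⟩
    simp only [Option.mem_def, Option.map_eq_some_iff]
    rintro _ ⟨y, hy, rfl⟩
    have := hLx y (mem_of_mem_head? hy)
    omega

lemma distinctParts_sylvester {l : List ℕ} (hl : OddParts l) : DistinctParts (sylvester l) :=
  ⟨isChain_sylvester hl, pos_of_mem_sylvester hl⟩

lemma runs_sylvester {l : List ℕ} (hl : OddParts l) : runs (sylvester l) = l.toFinset.card := by
  induction hl using OddParts.induction with
  | nil => simp [sylvester.eq_1, runs]
  | ones c => simp [sylvester_replicate_one, runs, toFinset_replicate_of_ne_zero]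
  | cons x c L hx hxo hL hLx ih =>
    rw [sylvester_cons_map_add_two_append hx hL.pos, runs_cons, runs_cons, ih,
      head?_sylvester, card_toFinset_cons_of_pairwise (hL.cons_map_add_two_append hxo hLx).1,
      card_toFinset_map_add_two_append]
    obtain ⟨k, rfl⟩ := hxo
    cases L with
    | nil => simp [head?_replicate]; split_ifs <;> omega
    | cons y L =>
      obtain ⟨j, rfl⟩ := hL.2 y mem_cons_self
      simp only [head?_cons, Option.map_some, Option.mem_def, Option.some.injEq, forall_eq',
        length_cons, map_cons, cons_append]
      split_ifs <;> omega

lemma sylvesterInv_sylvester {l : List ℕ} (hl : OddParts l) : sylvesterInv (sylvester l) = l := by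
  induction hl using OddParts.induction with
  | nil => simp [sylvester.eq_1, sylvesterInv]
  | ones c => simp [sylvester_replicate_one, sylvesterInv]
  | cons x c L hx hxo hL _ ih =>
    obtain ⟨k, rfl⟩ := hxo
    rw [sylvester_cons_map_add_two_append hx hL.pos, sylvesterInv, ih]
    simp only [cons.injEq]
    constructor
    · omega
    · congr 2; omega

lemma DistinctParts.tail {x : ℕ} {t : List ℕ} (h : DistinctParts (x :: t)) : DistinctParts t :=
  ⟨h.1.of_cons, fun y hy => h.2 y (mem_cons_of_mem x hy)⟩

lemma exists_mem_head?_le_of_pairwise_ge {K : List ℕ} (hK : K.Pairwise (· ≥ ·)) {y : ℕ}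
    (hy : y ∈ K) : ∃ z ∈ K.head?, y ≤ z := by
  cases K with
  | nil => simp at hy
  | cons z t => exact ⟨z, rfl, (mem_cons.1 hy).elim (·.le) ((pairwise_cons.1 hK).1 y)⟩

theorem sylvesterInv_spec :
    ∀ {μ : List ℕ}, DistinctParts μ →
      OddParts (sylvesterInv μ) ∧ sylvester (sylvesterInv μ) = μ
  | [], _ => ⟨OddParts.nil, by simp [sylvesterInv, sylvester.eq_1]⟩
  | [a], h => by
    obtain ⟨a, rfl⟩ := Nat.exists_eq_add_of_lt (h.2 a mem_cons_self)
    rw [sylvesterInv, zero_add]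
    exact ⟨OddParts.replicate_one _, sylvester_replicate_one a⟩
  | a :: b :: rest, h => by
    obtain ⟨hK, hsK⟩ := sylvesterInv_spec h.tail.tail
    rw [sylvesterInv]
    set K := sylvesterInv rest
    have hab : b < a := (isChain_cons_cons.1 h.1).1
    have hrest : ∀ r ∈ (sylvester K).head?, r < b := by
      rw [hsK]; exact (isChain_cons.1 (isChain_cons_cons.1 h.1).2).1
    rw [head?_sylvester] at hrest
    have hKb : ∀ y ∈ K, K.length + (y - 1) / 2 < b := fun y hy => by
      obtain ⟨z, hz, hyz⟩ := exists_mem_head?_le_of_pairwise_ge hK.1 hy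
      have := hrest _ (Option.mem_map_of_mem _ hz)
      omega
    have hlen : K.length < b := by
      by_cases hnil : K = []
      · rw [hnil]; exact h.2 b (by simp)
      · have := hKb _ (head_mem hnil); omega
    refine ⟨hK.cons_map_add_two_append ⟨b - K.length, rfl⟩ fun y hy => ?_, ?_⟩
    · obtain ⟨j, rfl⟩ := hK.2 y hy
      have := hKb _ hy
      omega
    · rw [sylvester_cons_map_add_two_append (by omega) hK.pos, hsK]
      simp only [cons.injEq, and_true]
      omega

lemma oddParts_sylvesterInv {μ : List ℕ} (h : DistinctParts μ) : OddParts (sylvesterInv μ) :=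
  (sylvesterInv_spec h).1

lemma sylvester_sylvesterInv {μ : List ℕ} (h : DistinctParts μ) :
    sylvester (sylvesterInv μ) = μ :=
  (sylvesterInv_spec h).2

lemma sum_sylvesterInv {μ : List ℕ} (h : DistinctParts μ) : (sylvesterInv μ).sum = μ.sum :=
  (sum_sylvester (oddParts_sylvesterInv h)).symm.trans
    (congrArg List.sum (sylvester_sylvesterInv h))

lemma card_toFinset_sylvesterInv {μ : List ℕ} (h : DistinctParts μ) :
    (sylvesterInv μ).toFinset.card = runs μ :=
  (runs_sylvester (oddParts_sylvesterInv h)).symm.trans (congrArg runs (sylvester_sylvesterInv h))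

def sylvesterEquiv (n m : ℕ) :
    {l : List ℕ // (OddParts l ∧ l.toFinset.card = m) ∧ l.sum = n} ≃
      {μ : List ℕ // (DistinctParts μ ∧ runs μ = m) ∧ μ.sum = n} where
  toFun l := ⟨sylvester l,
    ⟨distinctParts_sylvester l.2.1.1, (runs_sylvester l.2.1.1).trans l.2.1.2⟩,
      (sum_sylvester l.2.1.1).trans l.2.2⟩
  invFun μ := ⟨sylvesterInv μ,
    ⟨oddParts_sylvesterInv μ.2.1.1, (card_toFinset_sylvesterInv μ.2.1.1).trans μ.2.1.2⟩,
      (sum_sylvesterInv μ.2.1.1).trans μ.2.2⟩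
  left_inv l := Subtype.ext (sylvesterInv_sylvester l.2.1.1)
  right_inv μ := Subtype.ext (sylvester_sylvesterInv μ.2.1.1)

namespace Nat.Partition

lemma coe_plist {n : ℕ} (p : n.Partition) : (plist p : Multiset ℕ) = p.parts := by
  rw [plist, Multiset.coe_reverse, Multiset.sort_eq]

lemma sortedGE_plist {n : ℕ} (p : n.Partition) : (plist p).SortedGE :=
  (Multiset.pairwise_sort p.parts (· ≤ ·)).sortedLE.reverse

lemma plist_mk {n : ℕ} {l : List ℕ} (hl : l.SortedGE)
    (hpos : ∀ {i}, i ∈ (l : Multiset ℕ) → 0 < i)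
    (hsum : (l : Multiset ℕ).sum = n) : plist ⟨l, hpos, hsum⟩ = l :=
  (Multiset.coe_eq_coe.1 (coe_plist _)).eq_of_sortedGE (sortedGE_plist _) hl

theorem card_subtype_eq_card_list {n : ℕ} (P : n.Partition → Prop) (Q : List ℕ → Prop)
    (hPQ : ∀ p, P p ↔ Q (plist p)) (hQ : ∀ l, Q l → l.SortedGE ∧ ∀ x ∈ l, 0 < x) :
    Nat.card {p // P p} = Nat.card {l // Q l ∧ l.sum = n} :=
  Nat.card_congr
    { toFun p := ⟨plist p.1, (hPQ p.1).1 p.2, by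
        rw [← Multiset.sum_coe, coe_plist, p.1.parts_sum]⟩
      invFun l := ⟨⟨l.1, (hQ l.1 l.2.1).2 _, l.2.2⟩,
        (hPQ _).2 ((plist_mk (hQ l.1 l.2.1).1 _ _).symm ▸ l.2.1)⟩
      left_inv p := Subtype.ext (Nat.Partition.ext (coe_plist p.1))
      right_inv l := Subtype.ext (plist_mk (hQ l.1 l.2.1).1 _ _) }

lemma oddParts_plist_iff {n : ℕ} (p : n.Partition) :
    OddParts (plist p) ↔ ∀ k ∈ p.parts, Odd k := by
  rw [OddParts, ← coe_plist p]
  simp only [Multiset.mem_coe, (sortedGE_plist p).pairwise, true_and]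

lemma distinctParts_plist_iff {n : ℕ} (p : n.Partition) :
    DistinctParts (plist p) ↔ p.parts.Nodup := by
  rw [DistinctParts, ← sortedGT_iff_isChain, sortedGT_iff_nodup_and_sortedGE,
    ← Multiset.coe_nodup, coe_plist]
  simp only [sortedGE_plist, and_true, and_iff_left_iff_imp]
  exact fun _ x hx => p.parts_pos (by rwa [← coe_plist p])

lemma card_toFinset_plist {n : ℕ} (p : n.Partition) :
    (plist p).toFinset.card = p.parts.toFinset.card :=
  congrArg (·.toFinset.card) (coe_plist p)

lemma card_odd_eq_card_oddParts (n m : ℕ) :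
    Nat.card {p : n.Partition // (∀ k ∈ p.parts, Odd k) ∧ p.parts.toFinset.card = m} =
      Nat.card {l : List ℕ // (OddParts l ∧ l.toFinset.card = m) ∧ l.sum = n} :=
  card_subtype_eq_card_list _ _
    (fun p => by rw [oddParts_plist_iff, card_toFinset_plist])
    (fun _ hl => ⟨hl.1.1.sortedGE, hl.1.pos⟩)

lemma card_nodup_eq_card_distinctParts (n m : ℕ) :
    Nat.card {p : n.Partition // p.parts.Nodup ∧ runs (plist p) = m} =
      Nat.card {l : List ℕ // (DistinctParts l ∧ runs l = m) ∧ l.sum = n} :=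
  card_subtype_eq_card_list _ _
    (fun p => by rw [distinctParts_plist_iff])
    (fun _ hl => ⟨hl.1.1.sortedGT.sortedGE, hl.1.2⟩)

end Nat.Partition

theorem sylvester_refinement_general (n m : ℕ) :
    Nat.card {p : n.Partition // (∀ k ∈ p.parts, Odd k) ∧ p.parts.toFinset.card = m} =
    Nat.card {p : n.Partition // p.parts.Nodup ∧ runs (plist p) = m} := by
  rw [Nat.Partition.card_odd_eq_card_oddParts, Nat.Partition.card_nodup_eq_card_distinctParts]
  exact Nat.card_congr (sylvesterEquiv n m)

theorem sylvester_refinement (n m : ℕ) (hn : 0 < n) (hm : 1 ≤ m) :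
    Nat.card {p : n.Partition // (∀ k ∈ p.parts, Odd k) ∧ p.parts.toFinset.card = m} =
    Nat.card {p : n.Partition // p.parts.Nodup ∧ runs (plist p) = m} :=
  sylvester_refinement_general n m
end

section
/- Fix integers r ≥ 2 and 1 ≤ j ≤ r−1. For every n and every m ≥ 1, the number of partitions of n with all parts ≡ j (mod r) having exactly m distinct part sizes equals the number of partitions of n with multiplicity pattern j, r−j, j, r−j, ... (over strictly decreasing part sizes) that consist of exactly m maximal runs of consecutive integers. -/
/-!
A partition into parts `≡ j (mod r)` is the same as the weakly decreasing list `l` of the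
quotients `q ≥ 0` of its parts `r q + j`; its size is `r Σ l + j |l|` and its number of distinct
parts is the number of distinct entries of `l`. A partition with multiplicity pattern
`j, r - j, j, …` is the same as its list `e₁ > e₂ > ⋯` of distinct parts, of size
`j e₁ + (r - j) e₂ + j e₃ + ⋯`.

The bijection sends `l` to `e₁ = max l + |l|` followed by the image of `l'`, the conjugate of `l`
with its largest part removed, padded with zeros to length `max l`. As `Σ l' = Σ l - max l` and
`|l'| = max l`, the sizes match with the roles of `j` and `r - j` exchanged. Moreover
`e₁ - e₂ = 1 + #{i | lᵢ = 0}`, while the distinct entries of `l'` correspond to the nonzero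
distinct entries of `l`. So a new run starts after `e₁` exactly when passing to `l'` loses a
distinct entry, and by induction the runs of `e` are counted by the distinct entries of `l`.
-/

namespace Bessenrodt

section Counting

variable {l : List ℕ}

def maxEntry (l : List ℕ) : ℕ := l.foldr max 0

def countGT (l : List ℕ) (k : ℕ) : ℕ := l.countP (k < ·)

def countGE (l : List ℕ) (i : ℕ) : ℕ := l.countP (i ≤ ·)

theorem le_maxEntry {q : ℕ} (h : q ∈ l) : q ≤ maxEntry l :=
  List.le_max_of_le h le_rfl

theorem maxEntry_le {b : ℕ} (h : ∀ q ∈ l, q ≤ b) : maxEntry l ≤ b :=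
  List.max_le_of_forall_le l b h

theorem maxEntry_mem (h : l ≠ []) : maxEntry l ∈ l :=
  List.maximum_mem (List.foldr_max_of_ne_nil h).symm

theorem countGT_le_length (k : ℕ) : countGT l k ≤ l.length :=
  List.countP_le_length

theorem countGE_le_length (i : ℕ) : countGE l i ≤ l.length :=
  List.countP_le_length

theorem countGT_antitone : Antitone (countGT l) := fun _ _ h =>
  List.countP_mono_left fun _ _ hx => by simp only [decide_eq_true_eq] at hx ⊢; omega

theorem countGE_antitone : Antitone (countGE l) := fun _ _ h =>
  List.countP_mono_left fun _ _ hx => by simp only [decide_eq_true_eq] at hx ⊢; omega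

theorem countGT_pos {q k : ℕ} (hq : q ∈ l) (hk : k < q) : 0 < countGT l k :=
  List.countP_pos_iff.2 ⟨q, hq, by simpa using hk⟩

theorem countGE_zero : countGE l 0 = l.length :=
  List.countP_eq_length.2 fun _ _ => by simp

theorem countGT_zero_add_count : countGT l 0 + l.count 0 = l.length := by
  rw [countGT, List.count, List.length_eq_countP_add_countP (0 < ·)]
  congr 1
  exact List.countP_congr fun q _ => by cases q <;> simp

theorem countGT_lt_countGT {v k k' : ℕ} (hv : v ∈ l) (hk : k < v) (hk' : v ≤ k') :
    countGT l k' < countGT l k := by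
  simp only [countGT, List.countP_eq_length_filter]
  have hsub : (l.filter (k' < ·)).Sublist (l.filter (k < ·)) :=
    List.monotone_filter_right l fun q hq => by simp only [decide_eq_true_eq] at hq ⊢; omega
  refine lt_of_le_of_ne hsub.length_le fun heq => ?_
  have hmem : v ∈ l.filter (k < ·) := List.mem_filter.2 ⟨hv, by simpa using hk⟩
  rw [← hsub.eq_of_length heq] at hmem
  exact absurd hk' (not_le.2 (by simpa using (List.mem_filter.1 hmem).2))

theorem lt_countP_iff_of_pairwise (hs : l.Pairwise (· ≥ ·)) {P : ℕ → Bool}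
    (hP : ∀ a b, a ≤ b → P a → P b) {i : ℕ} (hi : i < l.length) :
    i < l.countP P ↔ P l[i] := by
  have hge : ∀ a b (hb : b < l.length) (hab : a ≤ b), l[b] ≤ l[a] := fun a b hb hab => by
    rcases hab.eq_or_lt with rfl | h
    · exact le_rfl
    · exact List.pairwise_iff_getElem.1 hs a b _ hb h
  constructor
  · intro h
    by_contra hPi
    have hdrop : (l.drop i).countP P = 0 := List.countP_eq_zero.2 fun q hq hPq => by
      obtain ⟨b, hb, rfl⟩ := List.getElem_of_mem hq
      rw [List.getElem_drop] at hPq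
      exact hPi (hP _ _ (hge i (i + b) (by rw [List.length_drop] at hb; omega) (by omega)) hPq)
    have htake : (l.take i).countP P ≤ i := List.countP_le_length.trans (by simp)
    rw [← l.take_append_drop i, List.countP_append] at h
    omega
  · intro h
    have htake : (l.take (i + 1)).countP P = i + 1 := by
      rw [List.countP_eq_length.2 fun q hq => ?_, List.length_take]
      · omega
      obtain ⟨b, hb, rfl⟩ := List.getElem_of_mem hq
      simp only [List.length_take] at hb
      rw [List.getElem_take]
      exact hP _ _ (hge b i hi (by omega)) h
    rw [← l.take_append_drop (i + 1), List.countP_append]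
    omega

theorem lt_countGT_iff (hs : l.Pairwise (· ≥ ·)) {i : ℕ} (hi : i < l.length) (k : ℕ) :
    i < countGT l k ↔ k < l[i] := by
  simpa [countGT] using lt_countP_iff_of_pairwise hs (P := (k < ·))
    (fun a b hab ha => by simp only [decide_eq_true_eq] at ha ⊢; omega) hi

theorem lt_countGE_iff (hs : l.Pairwise (· ≥ ·)) {k : ℕ} (hk : k < l.length) (i : ℕ) :
    k < countGE l i ↔ i ≤ l[k] := by
  simpa [countGE] using lt_countP_iff_of_pairwise hs (P := (i ≤ ·))
    (fun a b hab ha => by simp only [decide_eq_true_eq] at ha ⊢; omega) hk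

theorem countP_range_lt (B v : ℕ) : (List.range B).countP (· < v) = min v B := by
  induction B with
  | zero => simp
  | succ B ih =>
    rw [List.range_succ, List.countP_append, ih]
    by_cases h : B < v <;> simp [h] <;> omega

theorem countP_range_le (B v : ℕ) : (List.range B).countP (· ≤ v) = min (v + 1) B := by
  induction B with
  | zero => simp
  | succ B ih =>
    rw [List.range_succ, List.countP_append, ih]
    by_cases h : B ≤ v <;> simp [h] <;> omega

end Counting

section Peel

variable {l : List ℕ}

/-- For weakly decreasing `l`, `peel l` is the conjugate of `l.tail` padded with zeros to length
`maxEntry l`, and `conjPad N l` is the conjugate of `l` truncated or padded to length `N`. -/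
def peel (l : List ℕ) : List ℕ := (List.range (maxEntry l)).map fun k => countGT l k - 1

def conjPad (N : ℕ) (l : List ℕ) : List ℕ := (List.range N).map (countGE l)

@[simp] theorem length_peel : (peel l).length = maxEntry l := by simp [peel]

@[simp] theorem getElem_peel {k : ℕ} (hk : k < (peel l).length) :
    (peel l)[k] = countGT l k - 1 := by simp [peel]

@[simp] theorem length_conjPad (N : ℕ) : (conjPad N l).length = N := by simp [conjPad]

@[simp] theorem getElem_conjPad {N i : ℕ} (hi : i < (conjPad N l).length) :
    (conjPad N l)[i] = countGE l i := by simp [conjPad]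

theorem mem_peel {x : ℕ} : x ∈ peel l ↔ ∃ k < maxEntry l, countGT l k - 1 = x := by
  simp [peel]

theorem countGT_pos_of_lt_maxEntry {k : ℕ} (hk : k < maxEntry l) : 0 < countGT l k :=
  countGT_pos (maxEntry_mem (by rintro rfl; simp [maxEntry] at hk)) hk

theorem peel_eq_nil_iff : peel l = [] ↔ maxEntry l = 0 := by
  rw [← List.length_eq_zero_iff, length_peel]

theorem pairwise_peel (l : List ℕ) : (peel l).Pairwise (· ≥ ·) := by
  simp only [peel, List.pairwise_map]
  exact List.pairwise_lt_range.imp fun h => Nat.sub_le_sub_right (countGT_antitone h.le) 1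

theorem pairwise_conjPad (N : ℕ) (l : List ℕ) : (conjPad N l).Pairwise (· ≥ ·) := by
  simp only [conjPad, List.pairwise_map]
  exact List.pairwise_lt_range.imp fun h => countGE_antitone h.le

theorem maxEntry_conjPad {N : ℕ} (hN : 0 < N) : maxEntry (conjPad N l) = l.length := by
  refine le_antisymm (maxEntry_le fun q hq => ?_) ?_
  · obtain ⟨i, -, rfl⟩ := List.mem_map.1 hq
    exact countGE_le_length i
  · rw [← countGE_zero]
    exact le_maxEntry (List.mem_map.2 ⟨0, List.mem_range.2 hN, rfl⟩)

theorem conjPad_length_peel (hs : l.Pairwise (· ≥ ·)) : conjPad l.length (peel l) = l := by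
  refine List.ext_getElem (by simp) fun i _ hi => ?_
  rw [getElem_conjPad, countGE, peel, List.countP_map,
    List.countP_congr (q := (· < l[i])) fun k hk => ?_, countP_range_lt]
  · have := le_maxEntry (l.getElem_mem hi)
    omega
  · have h1 := countGT_pos_of_lt_maxEntry (List.mem_range.1 hk)
    have h2 := lt_countGT_iff hs hi k
    simp only [Function.comp_apply, decide_eq_true_eq]
    omega

theorem peel_conjPad {N : ℕ} (hs : l.Pairwise (· ≥ ·)) (hN : ∀ q ∈ l, q < N) :
    peel (conjPad N l) = l := by
  have hmax : maxEntry (conjPad N l) = l.length := by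
    rcases eq_or_ne l [] with rfl | hl
    · exact Nat.le_zero.1 (maxEntry_le fun q hq => by
        obtain ⟨i, -, rfl⟩ := List.mem_map.1 hq
        simp [countGE])
    · exact maxEntry_conjPad (Nat.zero_lt_of_lt (hN _ (maxEntry_mem hl)))
  refine List.ext_getElem (by simp [hmax]) fun k _ hk => ?_
  rw [getElem_peel, countGT, conjPad, List.countP_map,
    List.countP_congr (q := (· ≤ l[k])) fun i _ => ?_, countP_range_le]
  · have := hN _ (l.getElem_mem hk)
    omega
  · have := lt_countGE_iff hs hk i
    simp only [Function.comp_apply, decide_eq_true_eq]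
    omega

theorem sum_range_ite_lt (B a : ℕ) :
    ((List.range B).map fun k => if k < a then 1 else 0).sum = min a B := by
  induction B with
  | zero => simp
  | succ B ih =>
    rw [List.range_succ, List.map_append, List.sum_append, ih]
    by_cases h : B < a <;> simp [h] <;> omega

theorem sum_countGT_range {B : ℕ} (h : ∀ q ∈ l, q ≤ B) :
    ((List.range B).map (countGT l)).sum = l.sum := by
  induction l with
  | nil => simp [show countGT [] = fun _ => 0 from rfl]
  | cons a t ih =>
    have hsplit : countGT (a :: t) = fun k => countGT t k + if k < a then 1 else 0 := by
      funext k; simp [countGT, List.countP_cons]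
    rw [hsplit, List.sum_map_add, ih fun q hq => h q (by simp [hq]), sum_range_ite_lt,
      min_eq_left (h a (by simp)), List.sum_cons, add_comm]

theorem sum_peel_add_maxEntry (l : List ℕ) : (peel l).sum + maxEntry l = l.sum := by
  have hsub : ∀ L : List ℕ, (∀ k ∈ L, 0 < countGT l k) →
      (L.map fun k => countGT l k - 1).sum + L.length = (L.map (countGT l)).sum := by
    intro L hL
    induction L with
    | nil => simp
    | cons x L ih =>
      have := hL x (by simp)
      have := ih fun k hk => hL k (by simp [hk])
      simp only [List.map_cons, List.sum_cons, List.length_cons]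
      omega
  calc (peel l).sum + maxEntry l
      = ((List.range (maxEntry l)).map fun k => countGT l k - 1).sum
          + (List.range (maxEntry l)).length := by simp [peel]
    _ = ((List.range (maxEntry l)).map (countGT l)).sum :=
      hsub _ fun k hk => countGT_pos_of_lt_maxEntry (List.mem_range.1 hk)
    _ = l.sum := sum_countGT_range fun q hq => le_maxEntry hq

theorem sum_add_length_peel_lt (h : l ≠ []) :
    (peel l).sum + (peel l).length < l.sum + l.length := by
  have := sum_peel_add_maxEntry l
  have := List.length_pos_iff.2 h
  rw [length_peel]
  omega

theorem maxEntry_peel (h : 0 < maxEntry l) : maxEntry (peel l) = countGT l 0 - 1 := by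
  refine le_antisymm (maxEntry_le fun q hq => ?_) (le_maxEntry (mem_peel.2 ⟨0, h, rfl⟩))
  obtain ⟨k, -, rfl⟩ := mem_peel.1 hq
  exact Nat.sub_le_sub_right (countGT_antitone k.zero_le) 1

theorem maxEntry_peel_lt_length (h : l ≠ []) : maxEntry (peel l) < l.length := by
  have := List.length_pos_iff.2 h
  refine lt_of_le_of_lt (maxEntry_le fun q hq => ?_) (Nat.sub_lt this one_pos)
  obtain ⟨k, -, rfl⟩ := mem_peel.1 hq
  exact Nat.sub_le_sub_right (countGT_le_length k) 1

theorem exists_countGT_sub_one_eq {k : ℕ} (hk : k < maxEntry l) :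
    ∃ v ∈ l, 0 < v ∧ countGT l (v - 1) = countGT l k := by
  have hex : ∃ v, v ∈ l ∧ k < v :=
    ⟨maxEntry l, maxEntry_mem (by rintro rfl; simp [maxEntry] at hk), hk⟩
  classical
  obtain ⟨hv, hkv⟩ := Nat.find_spec hex
  refine ⟨Nat.find hex, hv, by omega, List.countP_congr fun q hq => ?_⟩
  have := fun h => Nat.find_min' hex (m := q) ⟨hq, h⟩
  simp only [decide_eq_true_eq]
  omega

theorem strictAntiOn_countGT_sub_one :
    StrictAntiOn (fun v => countGT l (v - 1) - 1) (l.toFinset.erase 0 : Set ℕ) := by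
  intro v hv v' hv' hlt
  simp only [Finset.coe_erase, Set.mem_sdiff, Finset.mem_coe, List.mem_toFinset,
    Set.mem_singleton_iff] at hv hv'
  have := countGT_lt_countGT hv.1 (Nat.sub_lt (Nat.pos_of_ne_zero hv.2) one_pos)
    (Nat.le_sub_one_of_lt hlt)
  have := countGT_pos hv'.1 (Nat.sub_lt (Nat.pos_of_ne_zero hv'.2) one_pos)
  dsimp only
  omega

theorem card_toFinset_peel : (peel l).toFinset.card = (l.toFinset.erase 0).card := by
  have himg : (peel l).toFinset = (l.toFinset.erase 0).image fun v => countGT l (v - 1) - 1 := by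
    ext x
    simp only [List.mem_toFinset, mem_peel, Finset.mem_image, Finset.mem_erase]
    constructor
    · rintro ⟨k, hk, rfl⟩
      obtain ⟨v, hv, hvpos, heq⟩ := exists_countGT_sub_one_eq hk
      exact ⟨v, ⟨hvpos.ne', hv⟩, by rw [heq]⟩
    · rintro ⟨v, ⟨hv0, hv⟩, rfl⟩
      exact ⟨v - 1, by have := le_maxEntry hv; omega, rfl⟩
  rw [himg, Finset.card_image_of_injOn strictAntiOn_countGT_sub_one.injOn]

end Peel

section HookSeq

variable {l : List ℕ}

def hookSeq : List ℕ → List ℕ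
  | [] => []
  | q :: t => (maxEntry (q :: t) + (q :: t).length) :: hookSeq (peel (q :: t))
termination_by l => l.sum + l.length
decreasing_by exact sum_add_length_peel_lt (List.cons_ne_nil q t)

def ofHookSeq : List ℕ → List ℕ
  | [] => []
  | e :: E => conjPad (e - (ofHookSeq E).length) (ofHookSeq E)

@[elab_as_elim]
theorem peel_induction {motive : List ℕ → Prop} (nil : motive [])
    (step : ∀ l, l ≠ [] → motive (peel l) → motive l) (l : List ℕ) : motive l := by
  rcases eq_or_ne l [] with rfl | hl
  · exact nil
  · exact step l hl (peel_induction nil step (peel l))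
termination_by l.sum + l.length
decreasing_by exact sum_add_length_peel_lt hl

@[simp] theorem hookSeq_nil : hookSeq [] = [] := by
  rw [hookSeq]

theorem hookSeq_of_ne_nil (h : l ≠ []) :
    hookSeq l = (maxEntry l + l.length) :: hookSeq (peel l) := by
  cases l with
  | nil => exact absurd rfl h
  | cons q t => rw [hookSeq]

theorem headD_hookSeq (l : List ℕ) : (hookSeq l).headD 0 = maxEntry l + l.length := by
  rcases eq_or_ne l [] with rfl | hl
  · simp [maxEntry]
  · simp [hookSeq_of_ne_nil hl]

theorem le_headD_of_pairwise {E : List ℕ} (hs : E.Pairwise (· > ·)) {x : ℕ} (hx : x ∈ E) :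
    x ≤ E.headD 0 := by
  cases E with
  | nil => simp at hx
  | cons e E =>
    rcases List.mem_cons.1 hx with rfl | hx
    · exact le_rfl
    · exact ((List.pairwise_cons.1 hs).1 x hx).le

theorem pairwise_hookSeq (l : List ℕ) : (hookSeq l).Pairwise (· > ·) := by
  induction l using peel_induction with
  | nil => simp
  | step l hl ih =>
    rw [hookSeq_of_ne_nil hl]
    refine List.pairwise_cons.2 ⟨fun b hb => ?_, ih⟩
    have := le_headD_of_pairwise ih hb
    have := maxEntry_peel_lt_length hl
    rw [headD_hookSeq, length_peel] at *
    omega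

theorem pos_of_mem_hookSeq : ∀ e ∈ hookSeq l, 0 < e := by
  induction l using peel_induction with
  | nil => simp
  | step l hl ih =>
    rw [hookSeq_of_ne_nil hl]
    rintro e (_ | ⟨_, he⟩)
    · exact Nat.add_pos_right _ (List.length_pos_iff.2 hl)
    · exact ih e he

theorem pairwise_ofHookSeq (E : List ℕ) : (ofHookSeq E).Pairwise (· ≥ ·) := by
  cases E with
  | nil => simp [ofHookSeq]
  | cons e E => exact pairwise_conjPad _ _

theorem ofHookSeq_hookSeq (hs : l.Pairwise (· ≥ ·)) : ofHookSeq (hookSeq l) = l := by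
  induction l using peel_induction with
  | nil => simp [ofHookSeq]
  | step l hl ih =>
    rw [hookSeq_of_ne_nil hl, ofHookSeq, ih (pairwise_peel l), length_peel,
      Nat.add_sub_cancel_left, conjPad_length_peel hs]

theorem hookSeq_ofHookSeq {E : List ℕ} (hs : E.Pairwise (· > ·)) (hpos : ∀ e ∈ E, 0 < e) :
    hookSeq (ofHookSeq E) = E := by
  induction E with
  | nil => simp [ofHookSeq]
  | cons e E ih =>
    obtain ⟨hlt, hsE⟩ := List.pairwise_cons.1 hs
    have hE : hookSeq (ofHookSeq E) = E := ih hsE fun x hx => hpos x (by simp [hx])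
    have hhead : maxEntry (ofHookSeq E) + (ofHookSeq E).length < e := by
      rw [← headD_hookSeq, hE]
      cases E with
      | nil => exact hpos e (by simp)
      | cons e' E => exact hlt e' (by simp)
    have hN : 0 < e - (ofHookSeq E).length := by omega
    have hne : ofHookSeq (e :: E) ≠ [] := by
      rw [ofHookSeq, ← List.length_pos_iff, length_conjPad]; exact hN
    rw [hookSeq_of_ne_nil hne, ofHookSeq, maxEntry_conjPad hN, length_conjPad,
      peel_conjPad (pairwise_ofHookSeq E) fun q hq => by have := le_maxEntry hq; omega, hE]
    congr 1
    omega

theorem runs_hookSeq (l : List ℕ) : runs (hookSeq l) = l.toFinset.card := by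
  induction l using peel_induction with
  | nil => simp [runs]
  | step l hl ih =>
    rw [hookSeq_of_ne_nil hl]
    rcases Nat.eq_zero_or_pos (maxEntry l) with hM | hM
    · have hl0 : l.toFinset = {0} := Finset.eq_singleton_iff_unique_mem.2
        ⟨List.mem_toFinset.2 (hM ▸ maxEntry_mem hl),
          fun v hv => Nat.le_zero.1 (hM ▸ le_maxEntry (List.mem_toFinset.1 hv))⟩
      rw [peel_eq_nil_iff.2 hM, hookSeq_nil, hl0]
      rfl
    · have hne : peel l ≠ [] := mt peel_eq_nil_iff.1 hM.ne'
      have hgap : countGT l 0 - 1 + maxEntry l + 1 < maxEntry l + l.length ↔ 0 ∈ l := by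
        have := countGT_zero_add_count (l := l)
        have := countGT_pos (maxEntry_mem hl) hM
        rw [← List.count_pos_iff]
        omega
      rw [hookSeq_of_ne_nil hne, runs, ← hookSeq_of_ne_nil hne, ih, card_toFinset_peel,
        maxEntry_peel hM, length_peel]
      by_cases h0 : 0 ∈ l
      · rw [if_pos (hgap.2 h0), add_comm, Finset.card_erase_add_one (List.mem_toFinset.2 h0)]
      · rw [if_neg (mt hgap.1 h0), Finset.erase_eq_of_notMem (mt List.mem_toFinset.1 h0),
          zero_add]

end HookSeq

section AltParts

def altParts (r : ℕ) : ℕ → List ℕ → Multiset ℕ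
  | _, [] => 0
  | j, e :: E => Multiset.replicate j e + altParts r (r - j) E

variable {r j : ℕ}

theorem mem_altParts (hj : 0 < j) (hjr : j < r) {E : List ℕ} {k : ℕ} :
    k ∈ altParts r j E ↔ k ∈ E := by
  induction E generalizing j with
  | nil => simp [altParts]
  | cons e E ih =>
    rw [altParts, Multiset.mem_add, Multiset.mem_replicate, ih (by omega) (by omega),
      List.mem_cons]
    constructor
    · rintro (⟨-, rfl⟩ | h) <;> simp [*]
    · rintro (rfl | h) <;> simp [*, hj.ne']

theorem count_altParts (hj : 0 < j) (hjr : j < r) {E : List ℕ} (hs : E.Pairwise (· > ·))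
    {i : ℕ} (hi : i < E.length) :
    (altParts r j E).count E[i] = if i % 2 = 0 then j else r - j := by
  induction E generalizing i j with
  | nil => simp at hi
  | cons e E ih =>
    obtain ⟨hlt, hsE⟩ := List.pairwise_cons.1 hs
    rw [altParts, Multiset.count_add, Multiset.count_replicate]
    cases i with
    | zero =>
      have : e ∉ altParts r (r - j) E := fun h =>
        lt_irrefl e (hlt e ((mem_altParts (by omega) (by omega)).1 h))
      simp [Multiset.count_eq_zero.2 this]
    | succ i =>
      have hi' : i < E.length := by simpa using hi
      have hne : e ≠ E[i] := (hlt _ (E.getElem_mem hi')).ne'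
      rw [List.getElem_cons_succ, if_neg hne, ih (by omega) (by omega) hsE hi']
      split_ifs <;> omega

theorem sum_altParts_hookSeq (l : List ℕ) (hj : j ≤ r) :
    (altParts r j (hookSeq l)).sum = r * l.sum + j * l.length := by
  induction l using peel_induction generalizing j with
  | nil => simp [altParts]
  | step l hl ih =>
    obtain ⟨d, rfl⟩ := Nat.exists_eq_add_of_le hj
    rw [hookSeq_of_ne_nil hl, altParts, Multiset.sum_add, Multiset.sum_replicate,
      ih (by omega), length_peel, ← sum_peel_add_maxEntry l, Nat.add_sub_cancel_left, smul_eq_mul]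
    ring

end AltParts

section Destutter

theorem exists_destutter'_eq_cons {α : Type*} (R : α → α → Prop) [DecidableRel R] (a : α)
    (l : List α) : ∃ t, l.destutter' R a = a :: t := by
  induction l generalizing a with
  | nil => exact ⟨[], rfl⟩
  | cons b l ih =>
    rw [List.destutter'_cons]
    split_ifs
    · exact ⟨_, rfl⟩
    · exact ih a

theorem runs_destutter' {a : ℕ} {l : List ℕ} (hs : (a :: l).Pairwise (· ≥ ·)) :
    runs (l.destutter' (· ≠ ·) a) = runs (a :: l) := by
  induction l generalizing a with
  | nil => rfl
  | cons b t ih =>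
    by_cases hab : a = b
    · subst hab
      rw [List.destutter'_cons_neg t (by simp), ih (hs.sublist (by simp))]
      simp [runs]
    · obtain ⟨u, hu⟩ := exists_destutter'_eq_cons (· ≠ ·) b t
      rw [List.destutter'_cons_pos t hab, hu, runs, ← hu, ih hs.of_cons, runs]

theorem runs_destutter {l : List ℕ} (hs : l.Pairwise (· ≥ ·)) :
    runs (l.destutter (· ≠ ·)) = runs l := by
  cases l with
  | nil => rfl
  | cons a l => rw [List.destutter_cons']; exact runs_destutter' hs

end Destutter

theorem eq_of_pairwise_gt_of_mem_iff {α : Type*} [LinearOrder α] {l₁ l₂ : List α}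
    (h₁ : l₁.Pairwise (· > ·)) (h₂ : l₂.Pairwise (· > ·)) (h : ∀ x, x ∈ l₁ ↔ x ∈ l₂) :
    l₁ = l₂ :=
  ((List.perm_ext_iff_of_nodup (h₁.imp ne_of_gt) (h₂.imp ne_of_gt)).2 h).eq_of_pairwise' h₁ h₂

section Partition

variable {n : ℕ} (p : n.Partition)

theorem pairwise_plist : (plist p).Pairwise (· ≥ ·) :=
  List.pairwise_reverse.2 (Multiset.pairwise_sort _ _)

theorem mem_plist {k : ℕ} : k ∈ plist p ↔ k ∈ p.parts := by
  rw [plist, List.mem_reverse, Multiset.mem_sort]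

theorem pairwise_dparts : (dparts p).Pairwise (· > ·) :=
  List.pairwise_reverse.2 (Finset.sortedLT_sort _).pairwise

theorem mem_dparts {k : ℕ} : k ∈ dparts p ↔ k ∈ p.parts := by
  rw [dparts, List.mem_reverse, Finset.mem_sort, Multiset.mem_toFinset]

theorem dparts_eq_destutter : dparts p = (plist p).destutter (· ≠ ·) := by
  rw [(pairwise_plist p).destutter_eq_dedup]
  refine eq_of_pairwise_gt_of_mem_iff (pairwise_dparts p) ?_ fun x => ?_
  · exact (((pairwise_plist p).sublist (List.dedup_sublist _)).and (List.nodup_dedup _)).imp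
      fun h => lt_of_le_of_ne h.1 h.2.symm
  · rw [mem_dparts, List.mem_dedup, mem_plist]

theorem runs_plist : runs (plist p) = runs (dparts p) := by
  rw [dparts_eq_destutter, runs_destutter (pairwise_plist p)]

end Partition

section Equivs

variable {r j : ℕ}

theorem altParts_dparts (hj : 0 < j) (hjr : j < r) {n : ℕ} {p : n.Partition}
    (hp : RPpat r j p) : altParts r j (dparts p) = p.parts := by
  refine Multiset.ext.2 fun k => ?_
  by_cases hk : k ∈ dparts p
  · obtain ⟨i, hi, rfl⟩ := List.getElem_of_mem hk
    rw [count_altParts hj hjr (pairwise_dparts p) hi, ← List.getD_eq_getElem _ 0 hi, hp i hi]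
  · rw [Multiset.count_eq_zero.2 (mt (mem_altParts hj hjr).1 hk),
      Multiset.count_eq_zero.2 (mt (mem_dparts p).2 hk)]

theorem dparts_eq_of_parts_eq (hj : 0 < j) (hjr : j < r) {n : ℕ} {p : n.Partition} {E : List ℕ}
    (hs : E.Pairwise (· > ·)) (hp : p.parts = altParts r j E) : dparts p = E :=
  eq_of_pairwise_gt_of_mem_iff (pairwise_dparts p) hs fun x => by
    rw [mem_dparts, hp, mem_altParts hj hjr]

theorem rpPat_of_parts_eq (hj : 0 < j) (hjr : j < r) {n : ℕ} {p : n.Partition} {E : List ℕ}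
    (hs : E.Pairwise (· > ·)) (hp : p.parts = altParts r j E) : RPpat r j p := by
  intro i hi
  rw [dparts_eq_of_parts_eq hj hjr hs hp] at hi ⊢
  rw [List.getD_eq_getElem _ 0 hi, hp, count_altParts hj hjr hs hi]

def rpEquiv (hj : 0 < j) (hjr : j < r) (n m : ℕ) :
    {p : n.Partition // RPpat r j p ∧ runs (plist p) = m} ≃
    {E : List ℕ // E.Pairwise (· > ·) ∧ (∀ e ∈ E, 0 < e) ∧ (altParts r j E).sum = n ∧
      runs E = m} where
  toFun p := ⟨dparts p.1, pairwise_dparts p.1, fun _ he => p.1.parts_pos ((mem_dparts p.1).1 he),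
    by rw [altParts_dparts hj hjr p.2.1, p.1.parts_sum], by rw [← runs_plist, p.2.2]⟩
  invFun E :=
    ⟨⟨altParts r j E.1, fun hk => E.2.2.1 _ ((mem_altParts hj hjr).1 hk), E.2.2.2.1⟩,
      rpPat_of_parts_eq hj hjr E.2.1 rfl,
      by rw [runs_plist, dparts_eq_of_parts_eq hj hjr E.2.1 rfl, E.2.2.2.2]⟩
  left_inv p := Subtype.ext (Nat.Partition.ext (altParts_dparts hj hjr p.2.1))
  right_inv E := Subtype.ext (dparts_eq_of_parts_eq hj hjr E.2.1 rfl)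

def hookSeqEquiv (hj : j ≤ r) (n m : ℕ) :
    {l : List ℕ // l.Pairwise (· ≥ ·) ∧ r * l.sum + j * l.length = n ∧ l.toFinset.card = m} ≃
    {E : List ℕ // E.Pairwise (· > ·) ∧ (∀ e ∈ E, 0 < e) ∧ (altParts r j E).sum = n ∧
      runs E = m} where
  toFun l := ⟨hookSeq l.1, pairwise_hookSeq l.1, fun _ => pos_of_mem_hookSeq _,
    by rw [sum_altParts_hookSeq _ hj, l.2.2.1], by rw [runs_hookSeq, l.2.2.2]⟩
  invFun E := ⟨ofHookSeq E.1, pairwise_ofHookSeq E.1,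
    by rw [← sum_altParts_hookSeq _ hj, hookSeq_ofHookSeq E.2.1 E.2.2.1, E.2.2.2.1],
    by rw [← runs_hookSeq, hookSeq_ofHookSeq E.2.1 E.2.2.1, E.2.2.2.2]⟩
  left_inv l := Subtype.ext (ofHookSeq_hookSeq l.2.1)
  right_inv E := Subtype.ext (hookSeq_ofHookSeq E.2.1 E.2.2.1)

def sortedEquiv {α : Type*} [LinearOrder α] (P : Multiset α → Prop) :
    {s : Multiset α // P s} ≃ {l : List α // l.Pairwise (· ≥ ·) ∧ P l} where
  toFun s := ⟨s.1.sort (· ≥ ·), Multiset.pairwise_sort _ _, by rw [Multiset.sort_eq]; exact s.2⟩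
  invFun l := ⟨l.1, l.2.2⟩
  left_inv s := Subtype.ext (Multiset.sort_eq _ _)
  right_inv l := Subtype.ext <|
    List.Perm.eq_of_pairwise' (Multiset.pairwise_sort (l.1 : Multiset α) _) l.2.1
      (Multiset.coe_eq_coe.1 (Multiset.sort_eq (l.1 : Multiset α) _))

theorem sum_map_mul_add (s : Multiset ℕ) :
    (s.map (r * · + j)).sum = r * s.sum + j * Multiset.card s := by
  induction s using Multiset.induction_on with
  | empty => simp
  | cons q s ih => simp only [Multiset.map_cons, Multiset.sum_cons, Multiset.card_cons, ih]; ring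

theorem card_toFinset_map_mul_add (hr : 0 < r) (s : Multiset ℕ) :
    (s.map (r * · + j)).toFinset.card = s.toFinset.card := by
  rw [Multiset.toFinset_map, Finset.card_image_of_injective]
  intro a b h
  simpa [hr.ne'] using h

theorem map_mul_add_map_div {s : Multiset ℕ} (h : ∀ k ∈ s, k % r = j) :
    (s.map (· / r)).map (r * · + j) = s := by
  rw [Multiset.map_map]
  conv_rhs => rw [← Multiset.map_id s]
  exact Multiset.map_congr rfl fun k hk => by simp [← h k hk, Nat.div_add_mod]

theorem map_div_map_mul_add (hjr : j < r) (s : Multiset ℕ) :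
    (s.map (r * · + j)).map (· / r) = s := by
  rw [Multiset.map_map]
  conv_rhs => rw [← Multiset.map_id s]
  exact Multiset.map_congr rfl fun q _ => by
    simp [Nat.mul_add_div (Nat.zero_lt_of_lt hjr), Nat.div_eq_of_lt hjr]

def quotientEquiv (hj : 0 < j) (hjr : j < r) (n m : ℕ) :
    {p : n.Partition // (∀ k ∈ p.parts, k % r = j) ∧ p.parts.toFinset.card = m} ≃
    {s : Multiset ℕ // r * s.sum + j * Multiset.card s = n ∧ s.toFinset.card = m} where
  toFun p := ⟨p.1.parts.map (· / r),
    by rw [← sum_map_mul_add, map_mul_add_map_div p.2.1, p.1.parts_sum],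
    by rw [← card_toFinset_map_mul_add (Nat.zero_lt_of_lt hjr), map_mul_add_map_div p.2.1, p.2.2]⟩
  invFun s := ⟨⟨s.1.map (r * · + j),
      fun hk => by obtain ⟨q, -, rfl⟩ := Multiset.mem_map.1 hk; omega,
      by rw [sum_map_mul_add, s.2.1]⟩,
    fun k hk => by obtain ⟨q, -, rfl⟩ := Multiset.mem_map.1 hk; simp [Nat.mod_eq_of_lt hjr],
    by rw [card_toFinset_map_mul_add (Nat.zero_lt_of_lt hjr), s.2.2]⟩
  left_inv p := Subtype.ext (Nat.Partition.ext (map_mul_add_map_div p.2.1))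
  right_inv s := Subtype.ext (map_div_map_mul_add hjr s.1)

end Equivs

end Bessenrodt

open Bessenrodt

theorem bessenrodt_refined_general (r j : ℕ) (hj1 : 1 ≤ j) (hj2 : j ≤ r - 1)
    (n m : ℕ) :
    Nat.card {p : n.Partition // (∀ k ∈ p.parts, k % r = j) ∧ p.parts.toFinset.card = m} =
    Nat.card {p : n.Partition // RPpat r j p ∧ runs (plist p) = m} := by
  have hjr : j < r := by omega
  calc _ = Nat.card {s : Multiset ℕ // r * s.sum + j * Multiset.card s = n ∧ s.toFinset.card = m} :=
        Nat.card_congr (quotientEquiv hj1 hjr n m)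
    _ = Nat.card {l : List ℕ //
          l.Pairwise (· ≥ ·) ∧ r * l.sum + j * l.length = n ∧ l.toFinset.card = m} :=
        Nat.card_congr ((sortedEquiv _).trans (Equiv.subtypeEquivRight fun l => by simp))
    _ = Nat.card {E : List ℕ //
          E.Pairwise (· > ·) ∧ (∀ e ∈ E, 0 < e) ∧ (altParts r j E).sum = n ∧ runs E = m} :=
        Nat.card_congr (hookSeqEquiv hjr.le n m)
    _ = _ := (Nat.card_congr (rpEquiv hj1 hjr n m)).symm

theorem bessenrodt_refined (r j : ℕ) (hr : 2 ≤ r) (hj1 : 1 ≤ j) (hj2 : j ≤ r - 1)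
    (n m : ℕ) (hm : 1 ≤ m) :
    Nat.card {p : n.Partition // (∀ k ∈ p.parts, k % r = j) ∧ p.parts.toFinset.card = m} =
    Nat.card {p : n.Partition // RPpat r j p ∧ runs (plist p) = m} :=
  bessenrodt_refined_general r j hj1 hj2 n m
end
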